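/- arXiv:2112.14360 — 5 statements merged into one kernel-verified Lean document; each statement's English description precedes it below -/
import Mathlib

section
/- Let A be an integral domain and let J ⊆ A be an ideal such that A is J-adically complete. If J is finite as a set, then J is the zero ideal. -/
/-- If `A` is an integral domain that is `J`-adically complete for an ideal `J ⊆ A`,
and `J` is finite as a set, then `J` is the zero ideal. -/
theorem ideal_eq_bot_of_finite_of_isAdicComplete
    {A : Type*} [CommRing A] [IsDomain A] (J : Ideal A) [IsAdicComplete J A]
    (hfin : (J : Set A).Finite) : J = ⊥ := by
  by_contra hJ
  obtain ⟨x, hxJ, hx0⟩ := Submodule.exists_mem_ne_zero_of_ne_bot hJ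
  -- A embeds into J via multiplication by x, so A is finite
  have hinj : Function.Injective (fun a : A => (⟨a * x, J.mul_mem_left a hxJ⟩ : (J : Set A))) := by
    intro a b hab
    have : a * x = b * x := congrArg Subtype.val hab
    exact mul_right_cancel₀ hx0 this
  have := hfin.to_subtype
  have hfinA : Finite A := Finite.of_injective _ hinj
  -- a finite integral domain is a field
  have : Fintype A := Fintype.ofFinite A
  have hfield : IsField A := Finite.isField_of_domain A
  letI := hfield.toField
  have hJtop : J = ⊤ := (Ideal.eq_bot_or_top J).resolve_left hJ
  -- Hausdorff-ness contradicts J = ⊤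
  have hH : IsHausdorff J A := IsAdicComplete.toIsHausdorff
  have h1 : (1 : A) = 0 := by
    apply hH.haus'
    intro n
    have : (J ^ n • ⊤ : Submodule A A) = ⊤ := by
      rw [hJtop]
      simp [Ideal.top_pow, Submodule.top_smul]
    rw [SModEq.sub_mem, this]
    trivial
  exact one_ne_zero h1
end

section
/- Let A be an integral domain and let J ⊆ A be an ideal such that the ideal (J) of the power series ring A⟦t⟧ generated by the image of J is a proper ideal. Let I₁, …, I_u be prime ideals of A⟦t⟧ such that for every j one has t ∈ I_j and (J) + (t) ⊄ I_j (where (t) is the principal ideal generated by the power series variable t). Then: (1) (J) is not contained in the union I₁ ∪ ⋯ ∪ I_u; (2) the set (J) \ ((J) ∩ (I₁ ∪ ⋯ ∪ I_u)) is infinite; (3) for every element c of (J) \ ((J) ∩ (I₁ ∪ ⋯ ∪ I_u)) and every j, one has t + c ∉ I_j. -/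
/-!
Since `t` lies in every `I j`, the hypothesis `(J) + (t) ⊄ I j` says `(J) ⊄ I j`, and prime
avoidance yields `c ∈ (J)` outside all `I j`. As `1 + t ^ (n + 1) ≡ 1` modulo every `I j`, the
elements `c * (1 + t ^ (n + 1))` of `(J)` avoid them too, and they are pairwise distinct because
`t` is a nonzero nonunit of the domain `A⟦t⟧`. Finally `t + c ∈ I j` would force `c ∈ I j`.
-/

namespace Ideal

variable {R ι : Type*} [CommRing R]

theorem not_subset_iUnion_prime [Finite ι] [Nonempty ι] {P : ι → Ideal R}
    (hP : ∀ i, (P i).IsPrime) {K : Ideal R} (hK : ∀ i, ¬K ≤ P i) :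
    ¬(K : Set R) ⊆ ⋃ i, (P i : Set R) := by
  obtain ⟨a⟩ := ‹Nonempty ι›
  intro h
  obtain ⟨i, -, hi⟩ := (subset_union_prime_finite Set.finite_univ a a
    (fun i _ _ _ => hP i) (I := K)).mp (by simpa using h)
  exact hK i hi

theorem mul_one_add_notMem {P : Ideal R} (hP : P.IsPrime) {c x : R} (hc : c ∉ P) (hx : x ∈ P) :
    c * (1 + x) ∉ P := by
  have h1x : 1 + x ∉ P := fun h =>
    hP.ne_top (P.eq_top_iff_one.mpr ((P.add_mem_iff_left hx).mp h))
  exact hP.mul_notMem hc h1x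

theorem infinite_diff_iUnion_prime [IsDomain R] [Nonempty ι] {P : ι → Ideal R}
    (hP : ∀ i, (P i).IsPrime) {x : R} (hx : ∀ i, x ∈ P i) (hx0 : x ≠ 0)
    {K : Ideal R} {c : R} (hcK : c ∈ K) (hc : ∀ i, c ∉ P i) :
    ((K : Set R) \ ⋃ i, (P i : Set R)).Infinite := by
  obtain ⟨i₀⟩ := ‹Nonempty ι›
  have hc0 : c ≠ 0 := fun h => hc i₀ (h ▸ (P i₀).zero_mem)
  have hxu : ¬IsUnit x := fun h => (hP i₀).ne_top ((P i₀).eq_top_of_isUnit_mem (hx i₀) h)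
  have hinj : Function.Injective fun n : ℕ => c * (1 + x ^ (n + 1)) :=
    (mul_right_injective₀ hc0).comp <| (add_right_injective 1).comp <|
      (pow_injective_of_not_isUnit hxu hx0).comp Nat.succ_injective
  refine Set.infinite_of_injective_forall_mem hinj fun n => ⟨K.mul_mem_right _ hcK, ?_⟩
  simp only [Set.mem_iUnion, SetLike.mem_coe, not_exists]
  exact fun i => mul_one_add_notMem (hP i) (hc i) (P i |>.pow_mem_of_mem (hx i) _ n.succ_pos)

end Ideal

theorem powerSeries_prime_avoidance_translates_general
    {A : Type*} [CommRing A] [IsDomain A] (J : Ideal A)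
    (u : ℕ) (hu : 0 < u) (I : Fin u → Ideal (PowerSeries A))
    (hprime : ∀ j, (I j).IsPrime)
    (htmem : ∀ j, (PowerSeries.X : PowerSeries A) ∈ I j)
    (hnle : ∀ j, ¬(Ideal.map ((PowerSeries.C : A →+* PowerSeries A)) J ⊔
      Ideal.span {(PowerSeries.X : PowerSeries A)} ≤ I j)) :
    (¬((Ideal.map ((PowerSeries.C : A →+* PowerSeries A)) J : Set (PowerSeries A)) ⊆
        ⋃ j, (I j : Set (PowerSeries A)))) ∧
    Set.Infinite ((Ideal.map ((PowerSeries.C : A →+* PowerSeries A)) J : Set (PowerSeries A)) \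
      ((Ideal.map ((PowerSeries.C : A →+* PowerSeries A)) J : Set (PowerSeries A)) ∩
        ⋃ j, (I j : Set (PowerSeries A)))) ∧
    (∀ c ∈ (Ideal.map ((PowerSeries.C : A →+* PowerSeries A)) J : Set (PowerSeries A)) \
        ((Ideal.map ((PowerSeries.C : A →+* PowerSeries A)) J : Set (PowerSeries A)) ∩
          ⋃ j, (I j : Set (PowerSeries A))),
      ∀ j, PowerSeries.X + c ∉ I j) := by
  have : Nonempty (Fin u) := ⟨⟨0, hu⟩⟩
  set K := Ideal.map (PowerSeries.C : A →+* PowerSeries A) J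
  have hK : ∀ j, ¬K ≤ I j := fun j hj =>
    hnle j (sup_le hj ((Ideal.span_singleton_le_iff_mem _).mpr (htmem j)))
  have avoid := Ideal.not_subset_iUnion_prime hprime hK
  simp only [Set.sdiff_self_inter]
  refine ⟨avoid, ?_, ?_⟩
  · obtain ⟨c, hcK, hc⟩ := Set.not_subset.mp avoid
    simp only [Set.mem_iUnion, SetLike.mem_coe, not_exists] at hc
    exact Ideal.infinite_diff_iUnion_prime hprime htmem PowerSeries.X_ne_zero hcK hc
  · rintro c ⟨-, hc⟩ j hXc
    exact hc (Set.mem_iUnion_of_mem j ((I j).add_mem_iff_right (htmem j) |>.mp hXc))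

/-- Let `A` be an integral domain and `J ⊆ A` an ideal such that the ideal `(J)` of `A⟦t⟧`
generated by the image of `J` is proper.  Let `I₁, …, I_u` be prime ideals of `A⟦t⟧`, each
containing `t` and not containing `(J) + (t)`.  Then `(J)` is not contained in the union of
the `I_j`, the set `(J) \ ((J) ∩ (I₁ ∪ ⋯ ∪ I_u))` is infinite, and for every `c` in this set
and every `j` we have `t + c ∉ I_j`. -/
theorem powerSeries_prime_avoidance_translates
    {A : Type*} [CommRing A] [IsDomain A] (J : Ideal A)
    (u : ℕ) (hu : 0 < u) (I : Fin u → Ideal (PowerSeries A))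
    (hproper : Ideal.map ((PowerSeries.C : A →+* PowerSeries A)) J ≠ ⊤)
    (hprime : ∀ j, (I j).IsPrime)
    (htmem : ∀ j, (PowerSeries.X : PowerSeries A) ∈ I j)
    (hnle : ∀ j, ¬(Ideal.map ((PowerSeries.C : A →+* PowerSeries A)) J ⊔
      Ideal.span {(PowerSeries.X : PowerSeries A)} ≤ I j)) :
    (¬((Ideal.map ((PowerSeries.C : A →+* PowerSeries A)) J : Set (PowerSeries A)) ⊆
        ⋃ j, (I j : Set (PowerSeries A)))) ∧
    Set.Infinite ((Ideal.map ((PowerSeries.C : A →+* PowerSeries A)) J : Set (PowerSeries A)) \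
      ((Ideal.map ((PowerSeries.C : A →+* PowerSeries A)) J : Set (PowerSeries A)) ∩
        ⋃ j, (I j : Set (PowerSeries A)))) ∧
    (∀ c ∈ (Ideal.map ((PowerSeries.C : A →+* PowerSeries A)) J : Set (PowerSeries A)) \
        ((Ideal.map ((PowerSeries.C : A →+* PowerSeries A)) J : Set (PowerSeries A)) ∩
          ⋃ j, (I j : Set (PowerSeries A))),
      ∀ j, PowerSeries.X + c ∉ I j) :=
  powerSeries_prime_avoidance_translates_general J u hu I hprime htmem hnle
end

section
/- Let A be an integral domain and J ⊆ A an ideal such that A is J-adically complete. Let I ⊆ A⟦t⟧ be a prime ideal with t ∉ I, and let c be a nonzero element of the ideal (J) of A⟦t⟧ generated by the image of J. Then: (1) if c ∈ I, then t + c^p ∉ I for every integer p ≥ 1; (2) if c ∉ I, then there is at most one integer p ≥ 1 such that t + c^p ∈ I. -/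
/-!
If `c ∈ I`, then `X + c ^ p ∈ I` would force `X ∈ I`. If `c ∉ I` and `X + c ^ p`, `X + c ^ q`
both lie in `I` with `p < q`, their difference `c ^ p * (1 - c ^ (q - p))` lies in `I`; the
constant coefficient of `c ^ (q - p)` lies in `J ⊆ jac(A)` by adic completeness, so
`1 - c ^ (q - p)` is a unit and primality forces `c ∈ I`.
-/

namespace PowerSeries

variable {A : Type*} [CommRing A]

theorem constantCoeff_mem_of_mem_map_C {J : Ideal A} {f : A⟦X⟧} (hf : f ∈ J.map (C : A →+* A⟦X⟧)) :
    constantCoeff f ∈ J := by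
  have hle : J.map (C : A →+* A⟦X⟧) ≤ J.comap constantCoeff :=
    Ideal.map_le_iff_le_comap.mpr fun a ha => by simpa [Ideal.mem_comap] using ha
  exact hle hf

theorem isUnit_one_sub_of_constantCoeff_mem (J : Ideal A) [IsAdicComplete J A] {f : A⟦X⟧}
    (hf : constantCoeff f ∈ J) : IsUnit (1 - f) := by
  rw [isUnit_iff_constantCoeff]
  apply Ideal.isUnit_of_sub_one_mem_jacobson_bot
  simpa using neg_mem (IsAdicComplete.le_jacobson_bot J hf)

end PowerSeries

theorem Ideal.IsPrime.eq_of_add_pow_mem {R : Type*} [CommRing R] {I : Ideal R} (hI : I.IsPrime)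
    {x c : R} (hc : c ∉ I) (hunit : ∀ n, 0 < n → IsUnit (1 - c ^ n)) {p q : ℕ}
    (hp : x + c ^ p ∈ I) (hq : x + c ^ q ∈ I) : p = q := by
  wlog hpq : p ≤ q generalizing p q
  · exact (this hq hp (le_of_not_ge hpq)).symm
  by_contra hne
  have hdiff : c ^ p * (1 - c ^ (q - p)) ∈ I := by
    rw [mul_sub, mul_one, ← pow_add, Nat.add_sub_cancel' hpq]
    simpa using I.sub_mem hp hq
  rcases hI.mem_or_mem hdiff with hcp | hunit_mem
  · exact hc (hI.mem_of_pow_mem _ hcp)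
  · exact hI.ne_top (I.eq_top_of_isUnit_mem hunit_mem (hunit _ (by omega)))

theorem powerSeries_translate_pow_mem_prime_general
    {A : Type*} [CommRing A] (J : Ideal A) [IsAdicComplete J A]
    (I : Ideal (PowerSeries A)) (hI : I.IsPrime)
    (htX : (PowerSeries.X : PowerSeries A) ∉ I)
    (c : PowerSeries A) (hcJ : c ∈ Ideal.map (PowerSeries.C : A →+* PowerSeries A) J) :
    (c ∈ I → ∀ p : ℕ, 1 ≤ p → PowerSeries.X + c ^ p ∉ I) ∧
    (c ∉ I → {p : ℕ | 1 ≤ p ∧ PowerSeries.X + c ^ p ∈ I}.Subsingleton) := by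
  refine ⟨fun hcI p hp hXp => htX ?_, fun hcI p hp q hq => hI.eq_of_add_pow_mem hcI ?_ hp.2 hq.2⟩
  · simpa using I.sub_mem hXp (I.pow_mem_of_mem hcI p hp)
  · intro n hn
    refine PowerSeries.isUnit_one_sub_of_constantCoeff_mem J ?_
    rw [map_pow]
    exact J.pow_mem_of_mem (PowerSeries.constantCoeff_mem_of_mem_map_C hcJ) n hn

/-- Let `A` be an integral domain which is `J`-adically complete, `I ⊆ A⟦t⟧` a prime ideal
with `t ∉ I`, and `c` a nonzero element of the ideal `(J)` of `A⟦t⟧` generated by the image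
of `J`.  Then (1) if `c ∈ I` then `t + c^p ∉ I` for all `p ≥ 1`; (2) if `c ∉ I` then there
is at most one integer `p ≥ 1` with `t + c^p ∈ I`. -/
theorem powerSeries_translate_pow_mem_prime
    {A : Type*} [CommRing A] [IsDomain A] (J : Ideal A) [IsAdicComplete J A]
    (I : Ideal (PowerSeries A)) (hI : I.IsPrime)
    (htX : (PowerSeries.X : PowerSeries A) ∉ I)
    (c : PowerSeries A) (hcJ : c ∈ Ideal.map (PowerSeries.C : A →+* PowerSeries A) J) (hc0 : c ≠ 0) :
    (c ∈ I → ∀ p : ℕ, 1 ≤ p → PowerSeries.X + c ^ p ∉ I) ∧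
    (c ∉ I → {p : ℕ | 1 ≤ p ∧ PowerSeries.X + c ^ p ∈ I}.Subsingleton) :=
  powerSeries_translate_pow_mem_prime_general J I hI htX c hcJ
end

section
/- Let A be an integral domain and J ⊆ A a proper ideal that is infinite as a set, and suppose A is J-adically complete. Let I₁, …, I_N be prime ideals of A⟦t⟧ such that (J) + (t) ⊄ I_i for every 1 ≤ i ≤ N, where (J) is the ideal of A⟦t⟧ generated by the image of J and (t) is the principal ideal generated by t. Then there exists an element c ∈ (J) such that t + c ∉ I_i for all 1 ≤ i ≤ N. -/
/-!
Suppose every `c ∈ J` has `t + c` in some `I_i`, and put `P_i = I_i ∩ A`. The `c ∈ J` with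
`t + c ∈ I_i` form, when there are any, a coset of `J ∩ P_i` in `J`, so by B. H. Neumann's lemma
on coset covers some such `J ∩ P_k` has finite index in `J`. Here `J ⊄ P_k`, since otherwise
`t ∈ I_k` and `(J) + (t) ⊆ I_k`. But completeness puts `J` inside the Jacobson radical, so the
domain `A/P_k` is not a finite field, hence infinite, and the image of `J` in it contains
`(A/P_k)·x ≅ A/P_k` for any `x ∈ J \ P_k`; so `J ∩ P_k` has infinite index.
-/

open PowerSeries Pointwise

theorem AddSubgroup.exists_finiteIndex_of_cover_of_sub_mem {G ι : Type*} [AddCommGroup G]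
    {s : Finset ι} {S : ι → Set G} {H : ι → AddSubgroup G}
    (hS : ∀ i, ∀ x ∈ S i, ∀ y ∈ S i, y - x ∈ H i) (hcovers : ⋃ i ∈ s, S i = Set.univ) :
    ∃ k ∈ s, (S k).Nonempty ∧ (H k).FiniteIndex := by
  classical
  let g : ι → G := fun i => if h : (S i).Nonempty then h.some else 0
  have hg : ∀ i, (S i).Nonempty → g i ∈ S i := fun i h => by
    simpa only [g, dif_pos h] using h.some_mem
  have hcosets : ⋃ i ∈ s.filter (S · |>.Nonempty), g i +ᵥ (H i : Set G) = Set.univ := by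
    refine Set.eq_univ_of_forall fun x => ?_
    obtain ⟨i, hi, hx⟩ := Set.mem_iUnion₂.mp (hcovers ▸ Set.mem_univ x)
    refine Set.mem_iUnion₂.mpr ⟨i, Finset.mem_filter.mpr ⟨hi, x, hx⟩, ?_⟩
    exact Set.mem_vadd_set.mpr ⟨x - g i, hS i _ (hg i ⟨x, hx⟩) x hx, by simp [vadd_eq_add]⟩
  obtain ⟨k, hk, hfin⟩ := AddSubgroup.exists_finiteIndex_of_leftCoset_cover hcosets
  exact ⟨k, (Finset.mem_filter.mp hk).1, (Finset.mem_filter.mp hk).2, hfin⟩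

namespace Ideal

variable {R : Type*} [CommRing R] {J P : Ideal R} [P.IsPrime]

theorem Quotient.infinite_of_le_jacobson_bot_of_not_le (hJ : J ≤ (⊥ : Ideal R).jacobson)
    (hJP : ¬ J ≤ P) : Infinite (R ⧸ P) := by
  refine not_finite_iff_infinite.mp fun _ => hJP ?_
  have : P.IsMaximal := Quotient.maximal_of_isField _ (Finite.isField_of_domain _)
  exact hJ.trans (sInf_le ⟨bot_le, this⟩)

theorem infinite_range_quotientMk_of_not_le [Infinite (R ⧸ P)] (hJP : ¬ J ≤ P) :
    (Set.range fun x : J => Quotient.mk P x).Infinite := by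
  obtain ⟨x₀, hx₀J, hx₀P⟩ := SetLike.not_le_iff_exists.mp hJP
  have hx₀ : Quotient.mk P x₀ ≠ 0 := by rwa [Ne, Quotient.eq_zero_iff_mem]
  refine (Set.infinite_range_of_injective (mul_left_injective₀ hx₀)).mono ?_
  rintro - ⟨d, rfl⟩
  obtain ⟨a, rfl⟩ := Quotient.mk_surjective d
  exact ⟨⟨a * x₀, J.mul_mem_left a hx₀J⟩, map_mul _ _ _⟩

theorem not_finiteIndex_ker_quotientMk_comp_subtype (hJ : J ≤ (⊥ : Ideal R).jacobson)
    (hJP : ¬ J ≤ P) :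
    ¬ ((Quotient.mk P).toAddMonoidHom.comp J.subtype.toAddMonoidHom).ker.FiniteIndex := by
  have := Quotient.infinite_of_le_jacobson_bot_of_not_le hJ hJP
  intro hfin
  refine hfin.index_ne_zero ?_
  rw [AddSubgroup.index_ker]
  exact @Nat.card_eq_zero_of_infinite _ (infinite_range_quotientMk_of_not_le hJP).to_subtype

end Ideal

theorem powerSeries_translation_lemma_general
    {A : Type*} [CommRing A] (J : Ideal A) [IsAdicComplete J A]
    (N : ℕ) (I : Fin N → Ideal (PowerSeries A))
    (hprime : ∀ i, (I i).IsPrime)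
    (hnle : ∀ i, ¬(Ideal.map (PowerSeries.C : A →+* PowerSeries A) J ⊔
      Ideal.span {(PowerSeries.X : PowerSeries A)} ≤ I i)) :
    ∃ c ∈ Ideal.map (PowerSeries.C : A →+* PowerSeries A) J, ∀ i, PowerSeries.X + c ∉ I i := by
  by_contra! hcon
  let P i := (I i).comap (C : A →+* A⟦X⟧)
  let S i : Set J := {c | X + C (c : A) ∈ I i}
  have hS : ∀ i, ∀ x ∈ S i, ∀ y ∈ S i,
      y - x ∈ ((Ideal.Quotient.mk (P i)).toAddMonoidHom.comp J.subtype.toAddMonoidHom).ker := by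
    intro i x hx y hy
    rw [AddMonoidHom.mem_ker]
    exact Ideal.Quotient.eq_zero_iff_mem.mpr (by simpa [P] using (I i).sub_mem hy hx)
  have hcovers : ⋃ i ∈ Finset.univ, S i = Set.univ :=
    Set.eq_univ_of_forall fun c => by simpa [S] using hcon (C c) (Ideal.mem_map_of_mem C c.2)
  obtain ⟨k, -, ⟨g, hg⟩, hfin⟩ := AddSubgroup.exists_finiteIndex_of_cover_of_sub_mem hS hcovers
  have hJP : ¬ J ≤ P k := fun hle => hnle k <| sup_le (Ideal.map_le_iff_le_comap.mpr hle) <|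
    (I k).span_singleton_le_iff_mem.mpr (by simpa using (I k).sub_mem hg (hle g.2))
  exact Ideal.not_finiteIndex_ker_quotientMk_comp_subtype
    (IsAdicComplete.le_jacobson_bot J) hJP hfin

/-- Let `A` be an integral domain and `J ⊆ A` a proper infinite ideal such that `A` is
`J`-adically complete.  Let `I₁, …, I_N` be prime ideals of `A⟦t⟧` none of which contains
the ideal `(J) + (t)`.  Then there is `c ∈ (J)` with `t + c ∉ I_i` for all `i`. -/
theorem powerSeries_translation_lemma
    {A : Type*} [CommRing A] [IsDomain A] (J : Ideal A) [IsAdicComplete J A]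
    (hJproper : J ≠ ⊤) (hJinf : (J : Set A).Infinite)
    (N : ℕ) (I : Fin N → Ideal (PowerSeries A))
    (hprime : ∀ i, (I i).IsPrime)
    (hnle : ∀ i, ¬(Ideal.map (PowerSeries.C : A →+* PowerSeries A) J ⊔
      Ideal.span {(PowerSeries.X : PowerSeries A)} ≤ I i)) :
    ∃ c ∈ Ideal.map (PowerSeries.C : A →+* PowerSeries A) J, ∀ i, PowerSeries.X + c ∉ I i :=
  powerSeries_translation_lemma_general J N I hprime hnle
end

section
/- Let A be a commutative ring and J ⊆ A an ideal such that A is J-adically complete. Then for every element c of the ideal of A⟦X⟧ generated by the image of J together with the power series variable X, the element 1 − c is a unit of A⟦X⟧. -/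
/-! A power series is a unit exactly when its constant coefficient is. The constant coefficient
of `c` lies in `J`, and `J`-adic completeness puts `J` inside the Jacobson radical of `A`
(this is where the geometric series converges), so `1 - c(0)` is a unit of `A`. -/

theorem Ideal.isUnit_one_sub_of_mem_jacobson_bot {R : Type*} [CommRing R] {x : R}
    (hx : x ∈ (⊥ : Ideal R).jacobson) : IsUnit (1 - x) := by
  simpa [sub_eq_neg_add, mul_comm] using Ideal.mem_jacobson_bot.mp hx (-1)

namespace PowerSeries

theorem map_C_sup_span_X_le_comap_constantCoeff {R : Type*} [CommRing R] (I : Ideal R) :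
    I.map (C : R →+* R⟦X⟧) ⊔ Ideal.span {X} ≤ I.comap constantCoeff := by
  refine sup_le ?_ ?_
  · rw [Ideal.map_le_iff_le_comap, Ideal.comap_comap, constantCoeff_comp_C, Ideal.comap_id]
  · rw [Ideal.span_le, Set.singleton_subset_iff, SetLike.mem_coe, Ideal.mem_comap,
      constantCoeff_X]
    exact I.zero_mem

end PowerSeries

/-- Let `A` be a commutative ring which is `J`-adically complete for an ideal `J ⊆ A`.
Then for every element `c` of the ideal of `A⟦X⟧` generated by the image of `J` together
with `X`, the element `1 - c` is a unit of `A⟦X⟧`. -/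
theorem powerSeries_one_sub_isUnit_of_mem
    {A : Type*} [CommRing A] (J : Ideal A) [IsAdicComplete J A]
    (c : PowerSeries A)
    (hc : c ∈ Ideal.map (PowerSeries.C : A →+* PowerSeries A) J ⊔
      Ideal.span {(PowerSeries.X : PowerSeries A)}) :
    IsUnit (1 - c) := by
  have hc₀ : PowerSeries.constantCoeff c ∈ J :=
    PowerSeries.map_C_sup_span_X_le_comap_constantCoeff J hc
  rw [PowerSeries.isUnit_iff_constantCoeff, map_sub, map_one]
  exact Ideal.isUnit_one_sub_of_mem_jacobson_bot (IsAdicComplete.le_jacobson_bot J hc₀)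
end
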